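/- For any matroid M of rank k on {1,...,n}, the sequence I_M = (I_1,...,I_n), where I_i is the lexicographically minimal base of M with respect to the shifted linear order i < i+1 < ... < n < 1 < ... < i−1, is a Grassmann necklace. -/

import Mathlib

/-!
A base that is lexicographically minimal for an order `<` is the greedy base: `u` lies in it
exactly when `u` is not in the matroid closure of its predecessors `{v | v < u}`. Passing from
`<_r` to `<_{r+1}` moves `r` from the first to the last place, so every `u ≠ r` loses
predecessors, its closure shrinks, and `u ∈ I_r` forces `u ∈ I_{r+1}`. As all bases have `k`
elements, `I_{r+1}` is then `I_r`, or `I_r` with `r` exchanged for one new element.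
-/

/-- The position of `i` in the cyclically shifted linear order
`r <_r r+1 <_r ⋯ <_r n-1 <_r 0 <_r ⋯ <_r r-1` on `Fin n`. -/
def shiftVal (n : ℕ) (r i : Fin n) : ℕ := ((i : ℕ) + n - (r : ℕ)) % n

/-- A Grassmann necklace: a sequence `(I_0, …, I_{n-1})` of subsets of `Fin n` such that
(indices mod `n`) if `i ∈ I_i` then `I_{i+1} = (I_i \ {i}) ∪ {j}` for some `j`, and if
`i ∉ I_i` then `I_{i+1} = I_i`. -/
def IsGrassmannNecklace {n : ℕ} [NeZero n] (I : Fin n → Finset (Fin n)) : Prop :=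
  ∀ i : Fin n, (i ∈ I i → ∃ j : Fin n, I (i + 1) = insert j ((I i).erase i)) ∧
    (i ∉ I i → I (i + 1) = I i)

/-- `B` is the lexicographically minimal member of `M` with respect to the shifted linear
order `<_r`: for any other `C ∈ M`, the `<_r`-minimal element of the symmetric difference
`B Δ C` lies in `B`. -/
def IsLexMin (n : ℕ) (r : Fin n) (M : Finset (Finset (Fin n))) (B : Finset (Fin n)) : Prop :=
  B ∈ M ∧ ∀ C ∈ M, C ≠ B → ∃ x ∈ B \ C, ∀ y ∈ C \ B, shiftVal n r x < shiftVal n r y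

open Set

lemma shiftVal_eq_val_sub {n : ℕ} (r i : Fin n) : shiftVal n r i = ((i - r : Fin n) : ℕ) := by
  rw [Fin.val_sub, shiftVal]
  congr 1
  omega

lemma shiftVal_succ {n : ℕ} [NeZero n] (r i : Fin n) :
    shiftVal n (r + 1) i = if i = r then n - 1 else shiftVal n r i - 1 := by
  obtain ⟨m, rfl⟩ := Nat.exists_eq_add_one_of_ne_zero (NeZero.ne n)
  simp only [shiftVal_eq_val_sub, ← sub_sub, Fin.coe_sub_one, sub_eq_zero, Nat.add_sub_cancel]

lemma shiftVal_lt {n : ℕ} (r i : Fin n) : shiftVal n r i < n := by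
  rw [shiftVal_eq_val_sub]
  exact Fin.isLt _

lemma setOf_shiftVal_succ_lt_subset {n : ℕ} [NeZero n] {r u : Fin n} (hu : u ≠ r) :
    {v | shiftVal n (r + 1) v < shiftVal n (r + 1) u} ⊆ {v | shiftVal n r v < shiftVal n r u} := by
  intro v (hv : shiftVal n (r + 1) v < shiftVal n (r + 1) u)
  have hlt := shiftVal_lt r u
  rw [shiftVal_succ, shiftVal_succ, if_neg hu] at hv
  split_ifs at hv <;> (show shiftVal n r v < shiftVal n r u; omega)

section LexMin

variable {α β : Type*} [DecidableEq α]

def IsLexMinBy [LT β] (f : α → β) (M : Finset (Finset α)) (B : Finset α) : Prop :=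
  B ∈ M ∧ ∀ C ∈ M, C ≠ B → ∃ x ∈ B \ C, ∀ y ∈ C \ B, f x < f y

theorem Matroid.exists_isBase_iff_of_exchange [Finite α] {k : ℕ} (M : Finset (Finset α))
    (hne : M.Nonempty) (hcard : ∀ B ∈ M, B.card = k)
    (hex : ∀ I ∈ M, ∀ J ∈ M, ∀ i ∈ I, ∃ j ∈ J, insert j (I.erase i) ∈ M) :
    ∃ N : Matroid α, ∀ S, N.IsBase S ↔ ∃ B ∈ M, ↑B = S := by
  have exchange : Matroid.ExchangeProperty fun S : Set α ↦ ∃ B ∈ M, ↑B = S := by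
    rintro _ _ ⟨X, hX, rfl⟩ ⟨Y, hY, rfl⟩ a ⟨haX, haY⟩
    obtain ⟨j, hjY, hjM⟩ := hex X hX Y hY a haX
    have hjX : j ∉ X := by
      intro hjX
      have hja : j ≠ a := by rintro rfl; exact haY hjY
      have hcard_j := hcard _ hjM
      rw [Finset.insert_eq_self.2 (Finset.mem_erase.2 ⟨hja, hjX⟩),
        Finset.card_erase_of_mem haX, hcard X hX] at hcard_j
      have hk : 0 < k := hcard X hX ▸ Finset.card_pos.2 ⟨a, haX⟩
      omega
    exact ⟨j, ⟨hjY, hjX⟩, _, hjM, by simp⟩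
  obtain ⟨B₀, hB₀⟩ := hne
  exact ⟨Matroid.ofIsBaseOfFinite finite_univ _ ⟨_, B₀, hB₀, rfl⟩ exchange
    (fun _ _ ↦ subset_univ _), fun _ ↦ Iff.rfl⟩

namespace IsLexMinBy

variable [Preorder β] {f : α → β} {M : Finset (Finset α)} {B : Finset α} {N : Matroid α}

theorem isBase (hB : IsLexMinBy f M B) (hN : ∀ S, N.IsBase S ↔ ∃ B ∈ M, ↑B = S) :
    N.IsBase ↑B :=
  (hN _).2 ⟨B, hB.1, rfl⟩

theorem mem_closure_of_notMem (hB : IsLexMinBy f M B) (hN : ∀ S, N.IsBase S ↔ ∃ B ∈ M, ↑B = S)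
    {u : α} (huB : u ∉ B) (huE : u ∈ N.E) : u ∈ N.closure (↑B ∩ {v | f v < f u}) := by
  refine ((hB.isBase hN).indep.subset inter_subset_left).mem_closure_iff'.2 ⟨huE, fun hind ↦ ?_⟩
  obtain ⟨_, hC, hCsub, -⟩ := hind.exists_isBase_subset_union_isBase (hB.isBase hN)
  obtain ⟨C, hCM, rfl⟩ := (hN _).1 hC
  have huC : u ∈ C := hCsub (mem_insert _ _)
  obtain ⟨x, hx, hxu⟩ := hB.2 C hCM (by rintro rfl; exact huB huC)
  rw [Finset.mem_sdiff] at hx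
  exact absurd (hCsub (mem_insert_of_mem _ ⟨hx.1, hxu u (Finset.mem_sdiff.2 ⟨huC, huB⟩)⟩)) hx.2

theorem mem_iff_notMem_closure (hB : IsLexMinBy f M B)
    (hN : ∀ S, N.IsBase S ↔ ∃ B ∈ M, ↑B = S) {u : α} (huE : u ∈ N.E) :
    u ∈ B ↔ u ∉ N.closure {v | f v < f u} := by
  refine ⟨fun huB hcl ↦ ?_, fun hcl ↦ by_contra fun huB ↦
    hcl (N.closure_subset_closure inter_subset_right (hB.mem_closure_of_notMem hN huB huE))⟩
  have hspan : {v | f v < f u} ∩ N.E ⊆ N.closure (↑B ∩ {v | f v < f u}) := by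
    rintro w ⟨hwu, hwE⟩
    by_cases hwB : w ∈ B
    · exact N.mem_closure_of_mem' ⟨hwB, hwu⟩
    · have hsub : (↑B ∩ {v | f v < f w} : Set α) ⊆ ↑B ∩ {v | f v < f u} :=
        fun v hv ↦ ⟨hv.1, lt_trans hv.2 hwu⟩
      exact N.closure_subset_closure hsub (hB.mem_closure_of_notMem hN hwB hwE)
  rw [← N.closure_inter_ground] at hcl
  have hJ : N.Indep (↑B ∩ {v | f v < f u}) := (hB.isBase hN).indep.subset inter_subset_left
  have hJu : N.Indep (insert u (↑B ∩ {v | f v < f u})) :=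
    (hB.isBase hN).indep.subset (insert_subset huB inter_subset_left)
  exact ((hJ.insert_indep_iff_of_notMem fun h ↦ lt_irrefl _ h.2).1 hJu).2
    (N.closure_subset_closure_of_subset_closure hspan hcl)

theorem mem_of_setOf_lt_subset {γ : Type*} [Preorder γ] {g : α → γ} {B' : Finset α}
    (hB : IsLexMinBy f M B) (hB' : IsLexMinBy g M B') (hN : ∀ S, N.IsBase S ↔ ∃ B ∈ M, ↑B = S)
    {u : α} (hfg : {v | g v < g u} ⊆ {v | f v < f u}) (hu : u ∈ B) : u ∈ B' := by
  have huE : u ∈ N.E := (hB.isBase hN).subset_ground hu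
  rw [hB.mem_iff_notMem_closure hN huE] at hu
  rw [hB'.mem_iff_notMem_closure hN huE]
  exact fun h ↦ hu (N.closure_subset_closure hfg h)

end IsLexMinBy

end LexMin

/-- For a matroid `M` of rank `k` on `Fin n`, the sequence whose `r`-th term is the
lexicographically minimal base of `M` with respect to the shifted order `<_r` is a
Grassmann necklace. -/
theorem matroid_lexmin_grassmann_necklace (n k : ℕ) [NeZero n]
    (M : Finset (Finset (Fin n))) (hne : M.Nonempty)
    (hcard : ∀ B ∈ M, B.card = k)
    (hex : ∀ I ∈ M, ∀ J ∈ M, ∀ i ∈ I, ∃ j ∈ J, insert j (I.erase i) ∈ M)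
    (I : Fin n → Finset (Fin n)) (hmin : ∀ r : Fin n, IsLexMin n r M (I r)) :
    IsGrassmannNecklace I := by
  obtain ⟨N, hN⟩ := Matroid.exists_isBase_iff_of_exchange M hne hcard hex
  intro r
  have hsub : (I r).erase r ⊆ I (r + 1) := fun u hu ↦
    IsLexMinBy.mem_of_setOf_lt_subset (hmin r) (hmin (r + 1)) hN
      (setOf_shiftVal_succ_lt_subset (Finset.ne_of_mem_erase hu)) (Finset.mem_of_mem_erase hu)
  have hcard_eq : (I (r + 1)).card = (I r).card := by
    rw [hcard _ (hmin _).1, hcard _ (hmin _).1]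
  refine ⟨fun hr ↦ ?_, fun hr ↦ ?_⟩
  · obtain ⟨j, -, hj⟩ := Finset.exists_eq_insert_iff.2
      ⟨hsub, by rw [Finset.card_erase_add_one hr, hcard_eq]⟩
    exact ⟨j, hj.symm⟩
  · rw [Finset.erase_eq_of_notMem hr] at hsub
    exact (Finset.eq_of_subset_of_card_le hsub hcard_eq.le).symm
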